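/- The cubic threefold {x₀²x₄ + x₁²x₃ + x₃³ + x₃²x₄ + x₃x₄² − x₄³ + x₂³ = 0} ⊂ ℙ⁴ has exactly two Eckardt points, namely (1:0:0:0:0) and (0:1:0:0:0). -/

import Mathlib

/-!
At `p = (a, b, c, d, e)` the matrix of the polar quadric splits as `3c` on the coordinate `x₂`
plus a 4 × 4 block on `x₀, x₁, x₃, x₄`. If `c ≠ 0`, rank ≤ 2 forces that block to have rank ≤ 1;
its 2 × 2 minors then kill `a, b, d, e`, and the cubic kills `c`. If `c = 0`, the 3 × 3 minors of
the block together with the cubic give `d = e = 0`, and the last minor `a b²` gives `a b = 0`.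
-/

open Matrix

theorem Matrix.det_submatrix_eq_zero_of_rank_lt {K m n : Type*} [Field K] [Fintype n] {k : ℕ}
    (A : Matrix m n K) (f : Fin k → m) (g : Fin k → n) (h : A.rank < k) :
    (A.submatrix f g).det = 0 := by
  by_contra hdet
  have hfull := rank_of_isUnit _ ((isUnit_iff_isUnit_det _).2 (Ne.isUnit hdet))
  have := rank_submatrix_le A f g
  simp only [Fintype.card_fin] at hfull
  omega

theorem Matrix.rank_le_of_eq_mul {K m n : Type*} [Field K] [Fintype n] {r : ℕ}
    {A : Matrix m n K} (B : Matrix m (Fin r) K) (C : Matrix (Fin r) n K) (h : A = B * C) :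
    A.rank ≤ r :=
  h ▸ (rank_mul_le_left B C).trans (B.rank_le_card_width.trans_eq (Fintype.card_fin r))

namespace CubicThreefold

def cubic (a b c d e : ℂ) : ℂ :=
  a ^ 2 * e + b ^ 2 * d + d ^ 3 + d ^ 2 * e + d * e ^ 2 - e ^ 3 + c ^ 3

/-- The matrix of the polar quadric `∑ pᵢ ∂cubic/∂xᵢ` at `p = (a, b, c, d, e)`, i.e. half the
Hessian of `cubic` at `p`. -/
def polarMatrix (a b c d e : ℂ) : Matrix (Fin 5) (Fin 5) ℂ :=
  !![e, 0, 0, 0, a;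
     0, d, 0, b, 0;
     0, 0, 3 * c, 0, 0;
     0, b, 0, 3 * d + e, d + e;
     a, 0, 0, d + e, d - 3 * e]

def IsEckardt (a b c d e : ℂ) : Prop :=
  cubic a b c d e = 0 ∧ (polarMatrix a b c d e).rank ≤ 2

variable {a b c d e : ℂ}

theorem minor_eq_zero_of_rank_le_two (h : (polarMatrix a b c d e).rank ≤ 2)
    (f g : Fin 3 → Fin 5) : ((polarMatrix a b c d e).submatrix f g).det = 0 :=
  det_submatrix_eq_zero_of_rank_lt _ f g (h.trans_lt (by norm_num))

theorem IsEckardt.c_eq_zero (h : IsEckardt a b c d e) : c = 0 := by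
  obtain ⟨hf, hrank⟩ := h
  by_contra hc
  -- The minors through the entry `3 * c` are `3 * c` times the 2 × 2 minors of the
  -- complementary 4 × 4 block, which therefore has rank at most one.
  have hde := minor_eq_zero_of_rank_le_two hrank ![0, 1, 2] ![0, 1, 2]
  have hdd := minor_eq_zero_of_rank_le_two hrank ![1, 2, 4] ![1, 2, 4]
  have hee := minor_eq_zero_of_rank_le_two hrank ![2, 3, 4] ![2, 3, 4]
  have hbb := minor_eq_zero_of_rank_le_two hrank ![1, 2, 3] ![1, 2, 3]
  have haa := minor_eq_zero_of_rank_le_two hrank ![0, 2, 4] ![0, 2, 4]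
  rw [det_fin_three] at hde hdd hee hbb haa
  simp [polarMatrix, -mul_eq_zero] at hde hdd hee hbb haa
  have cancel (x : ℂ) (hx : 3 * c * x ^ 2 = 0) : x = 0 :=
    pow_eq_zero_iff two_ne_zero |>.1 <| (mul_eq_zero.1 hx).resolve_left (by simpa using hc)
  obtain rfl : d = 0 := cancel d (by linear_combination hdd + 3 * hde)
  obtain rfl : e = 0 := cancel e (by linear_combination -hee / 4)
  obtain rfl : b = 0 := cancel b (by linear_combination -hbb)
  obtain rfl : a = 0 := cancel a (by linear_combination -haa)
  exact hc <| pow_eq_zero_iff three_ne_zero |>.1 <| by simpa [cubic] using hf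

theorem IsEckardt.d_eq_zero_and_e_eq_zero (h : IsEckardt a b 0 d e) : d = 0 ∧ e = 0 := by
  obtain ⟨hf, hrank⟩ := h
  have hde := minor_eq_zero_of_rank_le_two hrank ![0, 1, 3] ![0, 1, 4]
  have hbb := minor_eq_zero_of_rank_le_two hrank ![0, 1, 3] ![0, 1, 3]
  have haa := minor_eq_zero_of_rank_le_two hrank ![0, 1, 4] ![0, 1, 4]
  have hdd := minor_eq_zero_of_rank_le_two hrank ![1, 3, 4] ![1, 3, 4]
  have hee := minor_eq_zero_of_rank_le_two hrank ![0, 3, 4] ![0, 3, 4]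
  rw [det_fin_three] at hde hbb haa hdd hee
  simp [polarMatrix] at hde
  simp [polarMatrix, -mul_eq_zero] at hbb haa hdd hee
  simp only [cubic] at hf
  -- in each case a combination of the cubic and the minors is a nonzero multiple of `d³` or `e³`
  rcases hde with (rfl | rfl) | hde
  · exact ⟨pow_eq_zero_iff three_ne_zero |>.1 (by linear_combination (hf + hdd) / 3), rfl⟩
  · exact ⟨rfl, pow_eq_zero_iff three_ne_zero |>.1 (by linear_combination -(hf + hee) / 5)⟩
  · obtain rfl : e = -d := by linear_combination hde
    obtain rfl : d = 0 :=
      pow_eq_zero_iff three_ne_zero |>.1 (by linear_combination (hf - haa - hbb) / 8)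
    exact ⟨rfl, neg_zero⟩

theorem a_eq_zero_or_b_eq_zero_of_rank_le_two (h : (polarMatrix a b 0 0 0).rank ≤ 2) :
    a = 0 ∨ b = 0 := by
  have hab := minor_eq_zero_of_rank_le_two h ![0, 1, 3] ![1, 3, 4]
  rw [det_fin_three] at hab
  simpa [polarMatrix] using hab

theorem rank_polarMatrix_le_two_of_a_eq_zero (b : ℂ) : (polarMatrix 0 b 0 0 0).rank ≤ 2 :=
  rank_le_of_eq_mul !![0, 0; b, 0; 0, 0; 0, b; 0, 0] !![0, 0, 0, 1, 0; 0, 1, 0, 0, 0] <| by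
    ext i j; fin_cases i <;> fin_cases j <;> simp [polarMatrix]

theorem rank_polarMatrix_le_two_of_b_eq_zero (a : ℂ) : (polarMatrix a 0 0 0 0).rank ≤ 2 :=
  rank_le_of_eq_mul !![a, 0; 0, 0; 0, 0; 0, 0; 0, a] !![0, 0, 0, 0, 1; 1, 0, 0, 0, 0] <| by
    ext i j; fin_cases i <;> fin_cases j <;> simp [polarMatrix]

theorem isEckardt_iff : IsEckardt a b c d e ↔ c = 0 ∧ d = 0 ∧ e = 0 ∧ (a = 0 ∨ b = 0) := by
  constructor
  · intro h
    obtain rfl := h.c_eq_zero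
    obtain ⟨rfl, rfl⟩ := h.d_eq_zero_and_e_eq_zero
    exact ⟨rfl, rfl, rfl, a_eq_zero_or_b_eq_zero_of_rank_le_two h.2⟩
  · rintro ⟨rfl, rfl, rfl, rfl | rfl⟩
    · exact ⟨by simp [cubic], rank_polarMatrix_le_two_of_a_eq_zero b⟩
    · exact ⟨by simp [cubic], rank_polarMatrix_le_two_of_b_eq_zero a⟩

end CubicThreefold

/-- The cubic threefold `x₀²x₄ + x₁²x₃ + x₃³ + x₃²x₄ + x₃x₄² − x₄³ + x₂³ = 0` has
exactly two Eckardt points, namely `(1:0:0:0:0)` and `(0:1:0:0:0)`. -/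
theorem stmt_8 (p : Fin 5 → ℂ) (hp : p ≠ 0) :
    (p 0 ^ 2 * p 4 + p 1 ^ 2 * p 3 + p 3 ^ 3 + p 3 ^ 2 * p 4 + p 3 * p 4 ^ 2
        - p 4 ^ 3 + p 2 ^ 3 = 0 ∧
      (!![p 4, 0, 0, 0, p 0;
          0, p 3, 0, p 1, 0;
          0, 0, 3 * p 2, 0, 0;
          0, p 1, 0, 3 * p 3 + p 4, p 3 + p 4;
          p 0, 0, 0, p 3 + p 4, p 3 - 3 * p 4] : Matrix (Fin 5) (Fin 5) ℂ).rank ≤ 2) ↔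
    ((∃ t : ℂ, t ≠ 0 ∧ p = t • ![1, 0, 0, 0, 0]) ∨
     (∃ t : ℂ, t ≠ 0 ∧ p = t • ![0, 1, 0, 0, 0])) := by
  refine (CubicThreefold.isEckardt_iff (a := p 0) (b := p 1) (c := p 2) (d := p 3) (e := p 4)).trans
    ⟨?_, ?_⟩
  · rintro ⟨hc, hd, he, ha | hb⟩
    · have hp1 : p = p 1 • ![0, 1, 0, 0, 0] := by ext i; fin_cases i <;> simp [ha, hc, hd, he]
      exact Or.inr ⟨p 1, fun h => hp (by rw [hp1, h, zero_smul]), hp1⟩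
    · have hp0 : p = p 0 • ![1, 0, 0, 0, 0] := by ext i; fin_cases i <;> simp [hb, hc, hd, he]
      exact Or.inl ⟨p 0, fun h => hp (by rw [hp0, h, zero_smul]), hp0⟩
  · rintro (⟨t, -, rfl⟩ | ⟨t, -, rfl⟩) <;> simp
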